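/- Let G be an infinite discrete group. Then the Bernoulli flow 2^G has a point z that is free (the map g ↦ g·z is injective) and whose orbit G·z is dense in 2^G. -/

import Mathlib

/-
A point of `2^G` has dense orbit iff every finite pattern shows up in one of its right
translates, and it is free iff for every `c ≠ 1` some pair `γ, γ c` carries distinct values.
These are `#G` many requirements, each of which only fixes finitely many coordinates and can
be placed away from any set of fewer than `#G` coordinates. Well-order the requirements in
order type `(#G).ord`; every requirement then has fewer than `#G` predecessors, so a greedy
transfinite choice puts all of them on pairwise disjoint sets of coordinates.
-/

open Pointwise

section Defs

variable (G : Type*) [Group G]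

/-- The right-shift of `G` on `G → A`: `(g • z) h = z (h * g)`. -/
instance (priority := high) shiftSMul (A : Type*) : SMul G (G → A) :=
  ⟨fun g z h => z (h * g)⟩

/-- The right-shift action of `G` on `G → A` is a `G`-action (the Bernoulli flow when
`A = Bool`). -/
instance shiftMulAction (A : Type*) : MulAction G (G → A) where
  one_smul z := funext fun h => by show z (h * 1) = z h; rw [mul_one]
  mul_smul g₁ g₂ z := funext fun h => by
    show z (h * (g₁ * g₂)) = z (h * g₁ * g₂)
    rw [mul_assoc]

/-- `S ⊆ G` is `D`-separated if `Dg ∩ Dh = ∅` for all distinct `g, h ∈ S`. -/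
def DSeparated (D S : Set G) : Prop :=
  ∀ g ∈ S, ∀ h ∈ S, g ≠ h → Disjoint (D * ({g} : Set G)) (D * ({h} : Set G))

/-- The separated covering property for a `G`-flow `X`: for every finite `D ⊆ G`
and every nonempty open `U ⊆ X` there is a `D`-separated `S ⊆ G` with `S⁻¹U = X`. -/
def SCP (X : Type*) [TopologicalSpace X] [MulAction G X] : Prop :=
  ∀ D : Set G, D.Finite → ∀ U : Set X, IsOpen U → U.Nonempty →
    ∃ S : Set G, DSeparated G D S ∧ ∀ x : X, ∃ s ∈ S, s • x ∈ U

/-- A `G`-flow is minimal if every orbit is dense. -/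
def IsMinimalFlow (X : Type*) [TopologicalSpace X] [MulAction G X] : Prop :=
  ∀ x : X, Dense (MulAction.orbit G x)

/-- Two `G`-flows `X` and `Y` are disjoint if the only closed `G`-invariant subset of
`X × Y` projecting onto both factors is `X × Y` itself. -/
def FlowsDisjoint (X Y : Type*) [TopologicalSpace X] [TopologicalSpace Y]
    [MulAction G X] [MulAction G Y] : Prop :=
  ∀ J : Set (X × Y), IsClosed J → (∀ (g : G), ∀ p ∈ J, g • p ∈ J) →
    Prod.fst '' J = Set.univ → Prod.snd '' J = Set.univ → J = Set.univ

end Defs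

open Cardinal Set Function

universe u

theorem Cardinal.mk_iUnion_lt_of_finite {α ι : Type u} {κ : Cardinal.{u}} (hκ : ℵ₀ ≤ κ)
    (hι : #ι < κ) (s : ι → Set α) (hs : ∀ i, (s i).Finite) : #(⋃ i, s i) < κ := by
  rcases lt_or_ge #ι ℵ₀ with h | h
  · have : Finite ι := lt_aleph0_iff_finite.1 h
    exact (finite_iUnion hs).lt_aleph0.trans_le hκ
  · calc #(⋃ i, s i) ≤ #ι * ⨆ i, #(s i) := mk_iUnion_le s
      _ ≤ #ι * ℵ₀ := mul_le_mul_right (ciSup_le' fun i => (hs i).lt_aleph0.le) _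
      _ = #ι := mul_aleph0_eq h
      _ < κ := hι

theorem Cardinal.exists_notMem_of_mk_lt {α : Type u} {s : Set α} (hs : #s < #α) :
    ∃ a, a ∉ s := by
  by_contra! h
  rw [eq_univ_of_forall h, mk_univ] at hs
  exact hs.false

section Placement

variable {X ι : Type u} [Infinite X] (site : ι → X → Set X)

theorem exists_pairwise_disjoint_of_wellFoundedLT [LinearOrder ι] [WellFoundedLT ι]
    (hι : ∀ i : ι, #(Iio i) < #X) (hfin : ∀ i x, (site i x).Finite)
    (havoid : ∀ i (T : Set X), #T < #X → ∃ x, Disjoint (site i x) T) :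
    ∃ γ : ι → X, Pairwise (Disjoint on fun i => site i (γ i)) := by
  have hsmall (i : ι) (prev : ∀ j < i, X) : #(⋃ j : Iio i, site j (prev j j.2)) < #X :=
    mk_iUnion_lt_of_finite (aleph0_le_mk X) (hι i) _ fun j => hfin j _
  obtain ⟨γ, hγ⟩ : ∃ γ : ι → X, ∀ i, Disjoint (site i (γ i)) (⋃ j : Iio i, site j (γ j)) := by
    refine ⟨WellFoundedLT.fix fun i prev => (havoid i _ (hsmall i prev)).choose, fun i => ?_⟩
    rw [WellFoundedLT.fix_eq]
    exact Exists.choose_spec (p := fun x => Disjoint (site i x) _) _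
  refine ⟨γ, fun i j hij => ?_⟩
  rcases hij.lt_or_gt with h | h
  · exact ((hγ j).mono_right (subset_iUnion_of_subset ⟨i, h⟩ subset_rfl)).symm
  · exact (hγ i).mono_right (subset_iUnion_of_subset ⟨j, h⟩ subset_rfl)

theorem exists_pairwise_disjoint_of_mk_le (hι : #ι ≤ #X) (hfin : ∀ i x, (site i x).Finite)
    (havoid : ∀ i (T : Set X), #T < #X → ∃ x, Disjoint (site i x) T) :
    ∃ γ : ι → X, Pairwise (Disjoint on fun i => site i (γ i)) := by
  let e : ι ≃ (#ι).ord.ToType := Classical.choice (Cardinal.eq.1 (mk_ord_toType _).symm)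
  obtain ⟨γ, hγ⟩ := exists_pairwise_disjoint_of_wellFoundedLT (fun a => site (e.symm a))
    (fun a => (by simpa using mk_Iio_lt a : #(Iio a) < #ι).trans_le hι) (fun a => hfin _)
    (fun a => havoid _)
  refine ⟨γ ∘ e, fun i j hij => ?_⟩
  simpa [onFun] using hγ (e.injective.ne hij)

end Placement

theorem exists_disjoint_mul_singleton_mul {G : Type u} [Group G] [Infinite G] {s t T : Set G}
    (hs : s.Finite) (ht : t.Finite) (hT : #T < #G) :
    ∃ γ : G, Disjoint (s * {γ} * t : Set G) T := by
  have hsmall : #(s⁻¹ * T * t⁻¹ : Set G) < #G := by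
    have hG := aleph0_le_mk G
    calc #(s⁻¹ * T * t⁻¹ : Set G) ≤ #(s⁻¹ * T : Set G) * #(t⁻¹ : Set G) := mk_mul_le
      _ ≤ #(s⁻¹ : Set G) * #T * #(t⁻¹ : Set G) := by gcongr; exact mk_mul_le
      _ < #G := by
        rw [mk_inv, mk_inv]
        exact mul_lt_of_lt hG (mul_lt_of_lt hG (hs.lt_aleph0.trans_le hG) hT)
          (ht.lt_aleph0.trans_le hG)
  obtain ⟨γ, hγ⟩ := exists_notMem_of_mk_lt hsmall
  refine ⟨γ, disjoint_left.2 ?_⟩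
  rintro _ ⟨_, ⟨a, ha, _, rfl, rfl⟩, b, hb, rfl⟩ hT
  -- `a γ b ∈ T` puts `γ = a⁻¹ (a γ b) b⁻¹` into `s⁻¹ T t⁻¹`
  refine hγ ?_
  convert mul_mem_mul (mul_mem_mul (inv_mem_inv.2 ha) hT) (inv_mem_inv.2 hb) using 1
  group

theorem MulAction.injective_smul_of_forall_ne {G α : Type*} [Group G] [MulAction G α] {x : α}
    (h : ∀ g : G, g ≠ 1 → g • x ≠ x) : Function.Injective fun g : G => g • x := by
  intro a b hab
  by_contra hne
  refine h (b⁻¹ * a) (by rwa [Ne, inv_mul_eq_one, eq_comm]) ?_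
  rw [mul_smul, show a • x = b • x from hab, inv_smul_smul]

theorem dense_of_forall_finset_exists_eqOn {ι A : Type*} [TopologicalSpace A]
    {S : Set (ι → A)}
    (h : ∀ (F : Finset ι) (w : ι → A), ∃ y ∈ S, ∀ i ∈ F, y i = w i) : Dense S := by
  intro w
  rw [mem_closure_iff_nhds]
  intro t ht
  rw [nhds_pi, Filter.mem_pi] at ht
  obtain ⟨I, hI, u, hu, hut⟩ := ht
  obtain ⟨y, hyS, hy⟩ := h hI.toFinset w
  refine ⟨y, hut fun i hi => ?_, hyS⟩
  rw [hy i (hI.mem_toFinset.2 hi)]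
  exact mem_of_mem_nhds (hu i)

namespace Bernoulli

variable (G : Type u)

/-- `inl (F, P)` asks for a right translate `F γ` on which the point is `true` exactly on `P γ`;
`inr c` asks for a `γ` at which the point takes different values at `γ` and `γ c`. -/
abbrev Requirement := (Finset G × Finset G) ⊕ G

variable {G}

theorem mk_requirement [Infinite G] : #(Requirement G) = #G := by
  simp only [Requirement, mk_sum, mk_prod, mk_finset_of_infinite, lift_id]
  rw [mul_eq_self (aleph0_le_mk G), add_eq_self (aleph0_le_mk G)]

variable [Group G]

def Requirement.site : Requirement G → G → Set G
  | .inl (F, _), γ => (F : Set G) * {γ}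
  | .inr c, γ => {γ, γ * c}

def Requirement.marked : Requirement G → G → Set G
  | .inl (_, P), γ => (P : Set G) * {γ}
  | .inr _, γ => {γ}

theorem Requirement.site_finite (r : Requirement G) (γ : G) : (r.site γ).Finite := by
  rcases r with ⟨F, _⟩ | c
  · exact F.finite_toSet.mul (finite_singleton γ)
  · exact (finite_singleton _).insert γ

variable [Infinite G]

theorem Requirement.exists_disjoint_site (r : Requirement G) {T : Set G} (hT : #T < #G) :
    ∃ γ, Disjoint (r.site γ) T := by
  rcases r with ⟨F, _⟩ | c
  · simpa [site] using exists_disjoint_mul_singleton_mul F.finite_toSet finite_one hT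
  · obtain ⟨γ, hγ⟩ :=
      exists_disjoint_mul_singleton_mul finite_one ((finite_singleton c).insert 1) hT
    refine ⟨γ, hγ.mono_left ?_⟩
    simp [site, insert_subset_iff]

variable (G)

noncomputable def placement : Requirement G → G :=
  (exists_pairwise_disjoint_of_mk_le Requirement.site mk_requirement.le
    Requirement.site_finite fun r _ => r.exists_disjoint_site).choose

theorem pairwise_disjoint_site_placement :
    Pairwise (Disjoint on fun r : Requirement G => r.site (placement G r)) :=
  (exists_pairwise_disjoint_of_mk_le Requirement.site mk_requirement.le
    Requirement.site_finite fun r _ => r.exists_disjoint_site).choose_spec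

open scoped Classical in
noncomputable def genericPoint : G → Bool := fun x =>
  decide (∃ r : Requirement G, x ∈ r.site (placement G r) ∧ x ∈ r.marked (placement G r))

variable {G}

theorem genericPoint_eq_true_iff {r : Requirement G} {x : G} (hx : x ∈ r.site (placement G r)) :
    genericPoint G x = true ↔ x ∈ r.marked (placement G r) := by
  simp only [genericPoint, decide_eq_true_eq]
  refine ⟨fun ⟨r', hx', hm'⟩ => ?_, fun hm => ⟨r, hx, hm⟩⟩
  obtain rfl : r' = r := by
    by_contra hne
    exact disjoint_left.1 (pairwise_disjoint_site_placement G hne) hx' hx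
  exact hm'

theorem exists_smul_genericPoint_eq (F P : Finset G) :
    ∃ g : G, ∀ h ∈ F, (g • genericPoint G) h = true ↔ h ∈ P := by
  refine ⟨placement G (.inl (F, P)), fun h hh => ?_⟩
  refine (genericPoint_eq_true_iff (r := .inl (F, P)) (mul_mem_mul hh rfl)).trans ?_
  simp [Requirement.marked, mul_singleton]

theorem smul_genericPoint_ne {c : G} (hc : c ≠ 1) : c • genericPoint G ≠ genericPoint G := by
  set γ := placement G (.inr c)
  intro h
  have h₁ : genericPoint G γ = true :=
    (genericPoint_eq_true_iff (r := .inr c) (mem_insert γ _)).2 rfl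
  have h₂ : genericPoint G (γ * c) = false := by
    rw [Bool.eq_false_iff, Ne, genericPoint_eq_true_iff (r := .inr c) (mem_insert_of_mem γ rfl)]
    simpa [Requirement.marked] using hc
  have h₃ : genericPoint G (γ * c) = genericPoint G γ := congrFun h γ
  rw [h₁, h₂] at h₃
  exact Bool.false_ne_true h₃

end Bernoulli

/-- The Bernoulli flow `2^G` of an infinite group `G` has a free point
(the map `g ↦ g • z` is injective) whose orbit is dense. -/
theorem bernoulli_has_free_point_with_dense_orbit
    (G : Type*) [Group G] [Infinite G] :
    ∃ z : G → Bool,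
      Function.Injective (fun g : G => g • z) ∧ Dense (MulAction.orbit G z) := by
  classical
  refine ⟨Bernoulli.genericPoint G,
    MulAction.injective_smul_of_forall_ne fun c hc => Bernoulli.smul_genericPoint_ne hc,
    dense_of_forall_finset_exists_eqOn fun F w => ?_⟩
  obtain ⟨g, hg⟩ := Bernoulli.exists_smul_genericPoint_eq F (F.filter (w · = true))
  exact ⟨g • Bernoulli.genericPoint G, MulAction.mem_orbit _ g,
    fun h hh => Bool.eq_iff_iff.2 (by simp [hg h hh, hh])⟩
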